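/- Suppose A, A' ∈ ℂ^{n×n} satisfy ‖A‖_F = ‖A'‖_F = 1, λ, λ' ∈ ℂ, and v ∈ ℂ^n is nonzero with A_{λ,v} invertible. If μ(A,λ,v) · ( ‖A'−A‖_F + |λ'−λ| ) ≤ ε < 1, then A'_{λ',v} is invertible and (1−ε) · μ(A,λ,v) ≤ μ(A',λ',v) ≤ μ(A,λ,v)/(1−ε). -/

import Mathlib

noncomputable section

open Matrix Set

/-- `T_v`: the orthogonal complement of `v` in `ℂ^n`. -/
def Tv {n : ℕ} (v : EuclideanSpace ℂ (Fin n)) : Submodule ℂ (EuclideanSpace ℂ (Fin n)) :=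
  (ℂ ∙ v)ᗮ

/-- The linear map `A_{λ,v} : T_v → T_v`, `x ↦ P_{v⊥}((A - λ·Id) x)`. -/
def Alv {n : ℕ} (A : Matrix (Fin n) (Fin n) ℂ) (lam : ℂ) (v : EuclideanSpace ℂ (Fin n)) :
    Tv v →ₗ[ℂ] Tv v :=
  (Tv v).orthogonalProjectionOnto.toLinearMap ∘ₗ
    (Matrix.toEuclideanLin A - lam • LinearMap.id) ∘ₗ (Tv v).subtype

/-- `A_{λ,v}` as a continuous linear map. -/
def AlvC {n : ℕ} (A : Matrix (Fin n) (Fin n) ℂ) (lam : ℂ) (v : EuclideanSpace ℂ (Fin n)) :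
    Tv v →L[ℂ] Tv v :=
  LinearMap.toContinuousLinearMap (Alv A lam v)

/-- Frobenius norm of a complex matrix. -/
def frobNorm {n : ℕ} (A : Matrix (Fin n) (Fin n) ℂ) : ℝ :=
  Real.sqrt (∑ i, ∑ j, ‖A i j‖ ^ 2)

/-- The condition number `μ(A,λ,v) = ‖A‖_F ‖A_{λ,v}^{-1}‖`. -/
def mu {n : ℕ} (A : Matrix (Fin n) (Fin n) ℂ) (lam : ℂ) (v : EuclideanSpace ℂ (Fin n)) : ℝ :=
  frobNorm A * ‖(AlvC A lam v).inverse‖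

/-- Fubini-Study (angular) distance. -/
def dP {n : ℕ} (v w : EuclideanSpace ℂ (Fin n)) : ℝ :=
  Real.arccos (‖(inner ℂ v w : ℂ)‖ / (‖v‖ * ‖w‖))

/-- The distance on triples. -/
def distT {n : ℕ} (A : Matrix (Fin n) (Fin n) ℂ) (lam : ℂ) (v : EuclideanSpace ℂ (Fin n))
    (A' : Matrix (Fin n) (Fin n) ℂ) (lam' : ℂ) (v' : EuclideanSpace ℂ (Fin n)) : ℝ :=
  Real.sqrt ((frobNorm ((frobNorm A)⁻¹ • A - (frobNorm A')⁻¹ • A')) ^ 2 +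
    ‖lam / (frobNorm A : ℂ) - lam' / (frobNorm A' : ℂ)‖ ^ 2 + dP v v' ^ 2)

/-!
The map `(A, λ) ↦ A_{λ,v}` is affine, and compressing by the orthogonal projection onto `T_v`
does not increase operator norms, so `‖A'_{λ',v} - A_{λ,v}‖ ≤ ‖A' - A‖_F + |λ' - λ|` because the
Frobenius norm dominates the operator norm. With `‖A‖_F = ‖A'‖_F = 1` both condition numbers are
norms of inverses, and the claim is the usual perturbation bound for inverses in a Banach algebra:
if `‖T⁻¹‖ ‖S - T‖ ≤ ε < 1` then `S = T (1 + T⁻¹ (S - T))` is invertible by a Neumann series, and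
`T⁻¹ - S⁻¹ = T⁻¹ (S - T) S⁻¹` gives `‖T⁻¹ - S⁻¹‖ ≤ ε ‖S⁻¹‖`, whence both inequalities.
-/

open Ring

section NormedRing

variable {R : Type*} [NormedRing R]

theorem IsUnit.of_norm_inverse_mul_norm_sub_lt_one [HasSummableGeomSeries R] {a b : R}
    (ha : IsUnit a) (h : ‖a⁻¹ʳ‖ * ‖b - a‖ < 1) : IsUnit b := by
  have hsmall : ‖-(a⁻¹ʳ * (b - a))‖ < 1 := by
    rw [norm_neg]
    exact (norm_mul_le _ _).trans_lt h
  have hb : a * (1 - -(a⁻¹ʳ * (b - a))) = b := by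
    rw [sub_neg_eq_add, mul_add, mul_one, ← mul_assoc, Ring.mul_inverse_cancel a ha, one_mul,
      add_sub_cancel]
  exact hb ▸ ha.mul (isUnit_one_sub_of_norm_lt_one hsmall)

variable {a b : R} {ε : ℝ}

theorem norm_inverse_sub_inverse_le (h : IsUnit a ↔ IsUnit b) (hε : ‖a⁻¹ʳ‖ * ‖b - a‖ ≤ ε) :
    ‖a⁻¹ʳ - b⁻¹ʳ‖ ≤ ε * ‖b⁻¹ʳ‖ :=
  calc ‖a⁻¹ʳ - b⁻¹ʳ‖ = ‖a⁻¹ʳ * (b - a) * b⁻¹ʳ‖ := by rw [Ring.inverse_sub_inverse h]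
    _ ≤ ‖a⁻¹ʳ‖ * ‖b - a‖ * ‖b⁻¹ʳ‖ := (norm_mul_le _ _).trans (by gcongr; exact norm_mul_le _ _)
    _ ≤ ε * ‖b⁻¹ʳ‖ := by gcongr

theorem norm_inverse_le_div_one_sub (h : IsUnit a ↔ IsUnit b) (hε1 : ε < 1)
    (hε : ‖a⁻¹ʳ‖ * ‖b - a‖ ≤ ε) : ‖b⁻¹ʳ‖ ≤ ‖a⁻¹ʳ‖ / (1 - ε) := by
  rw [le_div_iff₀ (sub_pos.2 hε1)]
  have := norm_sub_norm_le b⁻¹ʳ a⁻¹ʳ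
  rw [norm_sub_rev] at this
  linarith [norm_inverse_sub_inverse_le h hε]

theorem one_sub_mul_norm_inverse_le (h : IsUnit a ↔ IsUnit b) (hε1 : ε < 1)
    (hε : ‖a⁻¹ʳ‖ * ‖b - a‖ ≤ ε) : (1 - ε) * ‖a⁻¹ʳ‖ ≤ ‖b⁻¹ʳ‖ := by
  have hab : ‖a⁻¹ʳ‖ ≤ (1 + ε) * ‖b⁻¹ʳ‖ := by
    linarith [norm_sub_norm_le a⁻¹ʳ b⁻¹ʳ, norm_inverse_sub_inverse_le h hε]
  calc (1 - ε) * ‖a⁻¹ʳ‖ ≤ (1 - ε) * ((1 + ε) * ‖b⁻¹ʳ‖) := by gcongr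
    _ = ‖b⁻¹ʳ‖ - ε ^ 2 * ‖b⁻¹ʳ‖ := by ring
    _ ≤ ‖b⁻¹ʳ‖ := by nlinarith [norm_nonneg b⁻¹ʳ]

end NormedRing

section Frobenius

attribute [local instance] Matrix.frobeniusSeminormedAddCommGroup

variable {n : ℕ}

theorem frobNorm_eq_norm (A : Matrix (Fin n) (Fin n) ℂ) : frobNorm A = ‖A‖ := by
  simp [frobNorm, frobenius_norm_def, Real.sqrt_eq_rpow]

theorem norm_toEuclideanCLM_le_frobNorm (A : Matrix (Fin n) (Fin n) ℂ) :
    ‖toEuclideanCLM (𝕜 := ℂ) A‖ ≤ frobNorm A := by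
  refine ContinuousLinearMap.opNorm_le_bound _ (Real.sqrt_nonneg _) fun x => ?_
  -- view `x` as a one-column matrix and use submultiplicativity of the Frobenius norm
  calc ‖toEuclideanCLM (𝕜 := ℂ) A x‖ = ‖replicateCol Unit (A *ᵥ x.ofLp)‖ := by
        rw [frobenius_norm_replicateCol, ← ofLp_toEuclideanCLM, WithLp.toLp_ofLp]
    _ = ‖A * replicateCol Unit x.ofLp‖ := by rw [replicateCol_mulVec]
    _ ≤ ‖A‖ * ‖replicateCol Unit x.ofLp‖ := frobenius_norm_mul _ _
    _ = frobNorm A * ‖x‖ := by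
        rw [frobNorm_eq_norm, frobenius_norm_replicateCol, WithLp.toLp_ofLp]

end Frobenius

section Alv

variable {n : ℕ}

theorem AlvC_eq_comp (A : Matrix (Fin n) (Fin n) ℂ) (lam : ℂ) (v : EuclideanSpace ℂ (Fin n)) :
    AlvC A lam v = (Tv v).orthogonalProjectionOnto ∘L
      (toEuclideanCLM (𝕜 := ℂ) A - lam • 1) ∘L (Tv v).subtypeL :=
  rfl

theorem AlvC_sub (A A' : Matrix (Fin n) (Fin n) ℂ) (lam lam' : ℂ) (v : EuclideanSpace ℂ (Fin n)) :
    AlvC A' lam' v - AlvC A lam v = AlvC (A' - A) (lam' - lam) v := by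
  rw [AlvC_eq_comp, AlvC_eq_comp, AlvC_eq_comp, ← ContinuousLinearMap.comp_sub,
    ← ContinuousLinearMap.sub_comp, map_sub]
  congr 2
  module

theorem norm_AlvC_le (A : Matrix (Fin n) (Fin n) ℂ) (lam : ℂ) (v : EuclideanSpace ℂ (Fin n)) :
    ‖AlvC A lam v‖ ≤ frobNorm A + ‖lam‖ := by
  have hM : ‖toEuclideanCLM (𝕜 := ℂ) A - lam • 1‖ ≤ frobNorm A + ‖lam‖ :=
    (norm_sub_le _ _).trans (add_le_add (norm_toEuclideanCLM_le_frobNorm A)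
      ((ContinuousLinearMap.opNorm_smul_le _ _).trans (mul_le_of_le_one_right (norm_nonneg _)
        ContinuousLinearMap.norm_id_le)))
  rw [AlvC_eq_comp]
  calc _ ≤ ‖(toEuclideanCLM (𝕜 := ℂ) A - lam • 1) ∘L (Tv v).subtypeL‖ :=
        (ContinuousLinearMap.opNorm_comp_le _ _).trans <|
          mul_le_of_le_one_left (ContinuousLinearMap.opNorm_nonneg _)
            (Submodule.orthogonalProjectionOnto_norm_le _)
    _ ≤ ‖toEuclideanCLM (𝕜 := ℂ) A - lam • 1‖ :=
        (ContinuousLinearMap.opNorm_comp_le _ _).trans <|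
          mul_le_of_le_one_right (ContinuousLinearMap.opNorm_nonneg _)
            (Submodule.norm_subtypeL_le _)
    _ ≤ frobNorm A + ‖lam‖ := hM

theorem mu_eq_norm_inverse {A : Matrix (Fin n) (Fin n) ℂ} (hA : frobNorm A = 1) (lam : ℂ)
    (v : EuclideanSpace ℂ (Fin n)) : mu A lam v = ‖(AlvC A lam v)⁻¹ʳ‖ := by
  rw [mu, hA, one_mul, ContinuousLinearMap.ringInverse_eq_inverse]

theorem isUnit_AlvC_iff_bijective (A : Matrix (Fin n) (Fin n) ℂ) (lam : ℂ)
    (v : EuclideanSpace ℂ (Fin n)) : IsUnit (AlvC A lam v) ↔ Function.Bijective (Alv A lam v) :=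
  ContinuousLinearMap.isUnit_iff_bijective

end Alv

theorem mu_perturb_A_lam_general {n : ℕ} (A A' : Matrix (Fin n) (Fin n) ℂ)
    (hA : frobNorm A = 1) (hA' : frobNorm A' = 1)
    (lam lam' : ℂ) (v : EuclideanSpace ℂ (Fin n))
    (hinv : Function.Bijective (Alv A lam v))
    (ε : ℝ) (hε1 : ε < 1)
    (hcond : mu A lam v * (frobNorm (A' - A) + ‖lam' - lam‖) ≤ ε) :
    Function.Bijective (Alv A' lam' v) ∧
      (1 - ε) * mu A lam v ≤ mu A' lam' v ∧
      mu A' lam' v ≤ mu A lam v / (1 - ε) := by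
  set T := AlvC A lam v
  set S := AlvC A' lam' v
  rw [mu_eq_norm_inverse hA, mu_eq_norm_inverse hA'] at *
  have hT : IsUnit T := (isUnit_AlvC_iff_bijective A lam v).2 hinv
  have hε : ‖T⁻¹ʳ‖ * ‖S - T‖ ≤ ε := by
    rw [AlvC_sub]
    exact (mul_le_mul_of_nonneg_left (norm_AlvC_le (A' - A) (lam' - lam) v)
      (norm_nonneg T⁻¹ʳ)).trans hcond
  have hS : IsUnit S := hT.of_norm_inverse_mul_norm_sub_lt_one (b := S) (hε.trans_lt hε1)
  have hTS : IsUnit T ↔ IsUnit S := iff_of_true hT hS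
  exact ⟨(isUnit_AlvC_iff_bijective A' lam' v).1 hS,
    one_sub_mul_norm_inverse_le (b := S) hTS hε1 hε,
    norm_inverse_le_div_one_sub (b := S) hTS hε1 hε⟩

/-- Lemma: perturbing `A` and `λ` while keeping `v` fixed. -/
theorem mu_perturb_A_lam {n : ℕ} (A A' : Matrix (Fin n) (Fin n) ℂ)
    (hA : frobNorm A = 1) (hA' : frobNorm A' = 1)
    (lam lam' : ℂ) (v : EuclideanSpace ℂ (Fin n)) (hv : v ≠ 0)
    (hinv : Function.Bijective (Alv A lam v))
    (ε : ℝ) (hε1 : ε < 1)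
    (hcond : mu A lam v * (frobNorm (A' - A) + ‖lam' - lam‖) ≤ ε) :
    Function.Bijective (Alv A' lam' v) ∧
      (1 - ε) * mu A lam v ≤ mu A' lam' v ∧
      mu A' lam' v ≤ mu A lam v / (1 - ε) :=
  mu_perturb_A_lam_general A A' hA hA' lam lam' v hinv ε hε1 hcond
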